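/- Convergence rate of Nesterov's method in terms of initial data: there exists a constant c > 0, depending only on ζ and M, such that every solution of the Nesterov system satisfies, for all t ≥ 1, (ζ²/M)·(L(z₁(t)) - L*) ≤ V₁((z₁(t), z₂(t)), t) ≤ (9c/(t+2)²)·(‖z₁(0) - z₁*‖² + ‖z₂(0)‖²); in particular L(z₁(t)) - L* decays at rate 1/(t+2)². -/

import Mathlib

/-!
For `t ≥ 1` the extrapolation coefficient `(t - 1) / (t + 2)` is nonnegative, and convexity of `L`
at the extrapolated point `z₁ + ((t - 1) / (t + 2)) • z₂` gives `V₁' ≤ -(2 / (t + 2)) V₁` along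
solutions, so `(t + 2)² V₁` is nonincreasing on `[1, ∞)`. On `[0, 1]` a crude Grönwall estimate for
`‖z₁ - z₁*‖² + ‖z₂‖²`, whose growth is controlled by the Lipschitz bound on `∇L`, bounds `V₁` at
time `1` by the initial data.
-/

open scoped RealInnerProductSpace

open Set

noncomputable section

variable {E : Type*} [NormedAddCommGroup E] [InnerProductSpace ℝ E]
  {L : E → ℝ} {x zs v : E} {k M : ℝ} {z₁ z₂ : ℝ → E}

theorem two_mul_inner_add_two_mul_inner_le {p q G : E} {c : ℝ} (hc : 0 ≤ c) (hk : 0 ≤ k)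
    (hM : 0 ≤ M) (hG : ‖G‖ ≤ M * (‖p‖ + ‖q‖)) :
    2 * ⟪p, q⟫ + 2 * ⟪q, -(c • q) - k • G⟫ ≤ (1 + 3 * (k * M)) * (‖p‖ ^ 2 + ‖q‖ ^ 2) := by
  have hqG : -⟪q, G⟫ ≤ ‖q‖ * (M * (‖p‖ + ‖q‖)) :=
    (neg_le_abs _).trans ((abs_real_inner_le_norm q G).trans (by gcongr))
  have hkM : 0 ≤ k * M := mul_nonneg hk hM
  rw [inner_sub_right, inner_neg_right, inner_smul_right, inner_smul_right,
    real_inner_self_eq_norm_sq]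
  nlinarith [real_inner_le_norm p q, mul_nonneg hc (sq_nonneg ‖q‖), sq_nonneg (‖p‖ - ‖q‖),
    mul_nonneg hkM (sq_nonneg (‖p‖ - ‖q‖)), mul_nonneg hkM (sq_nonneg ‖p‖),
    mul_le_mul_of_nonneg_left hqG hk]

variable [CompleteSpace E]

theorem HasGradientAt.comp_hasDerivAt {g : E} {γ : ℝ → E} {t : ℝ}
    (hL : HasGradientAt L g (γ t)) (hγ : HasDerivAt γ v t) :
    HasDerivAt (fun s ↦ L (γ s)) ⟪g, v⟫ t := by
  simpa [Function.comp_def, InnerProductSpace.toDual_apply_apply] using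
    hL.hasFDerivAt.comp_hasDerivAt t hγ

theorem IsLocalMin.gradient_eq_zero (h : IsLocalMin L x) : gradient L x = 0 := by
  simp [gradient, h.fderiv_eq_zero]

theorem ConvexOn.add_inner_gradient_le (hc : ConvexOn ℝ univ L) (hd : DifferentiableAt ℝ L x)
    (y : E) : L x + ⟪gradient L x, y - x⟫ ≤ L y := by
  have hφ : ConvexOn ℝ univ fun s : ℝ ↦ L (x + s • (y - x)) := by
    simpa [Function.comp_def, AffineMap.lineMap_apply, add_comm] using
      hc.comp_affineMap (AffineMap.lineMap x y : ℝ →ᵃ[ℝ] E)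
  have hφ' : HasDerivAt (fun s : ℝ ↦ L (x + s • (y - x))) ⟪gradient L x, y - x⟫ 0 :=
    HasGradientAt.comp_hasDerivAt (by simpa using hd.hasGradientAt)
      (by simpa using ((hasDerivAt_id (0 : ℝ)).smul_const (y - x)).const_add x)
  have := hφ.le_slope_of_hasDerivAt (mem_univ 0) (mem_univ 1) one_pos hφ'
  simp only [slope_def_field, zero_smul, add_zero, one_smul, add_sub_cancel, sub_zero,
    div_one] at this
  linarith

theorem ConvexOn.inner_gradient_sub_gradient_nonneg (hc : ConvexOn ℝ univ L)
    (hd : Differentiable ℝ L) (x y : E) : 0 ≤ ⟪gradient L x - gradient L y, x - y⟫ := by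
  have hxy := hc.add_inner_gradient_le (hd x) y
  have hyx := hc.add_inner_gradient_le (hd y) x
  rw [← neg_sub x y, inner_neg_right] at hxy
  rw [inner_sub_left]
  linarith

theorem ConvexOn.inner_gradient_add_smul_sub_nonneg (hc : ConvexOn ℝ univ L)
    (hd : Differentiable ℝ L) (x v : E) {s : ℝ} (hs : 0 ≤ s) :
    0 ≤ ⟪gradient L (x + s • v) - gradient L x, v⟫ := by
  rcases hs.eq_or_lt with rfl | hs
  · simp
  have := hc.inner_gradient_sub_gradient_nonneg hd (x + s • v) x
  rw [add_sub_cancel_left, inner_smul_right] at this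
  exact nonneg_of_mul_nonneg_right this hs

theorem ConvexOn.sub_le_of_norm_gradient_le (hc : ConvexOn ℝ univ L)
    (hd : DifferentiableAt ℝ L x) (hM : ‖gradient L x‖ ≤ M * ‖x - zs‖) :
    L x - L zs ≤ M * ‖x - zs‖ ^ 2 := by
  have h := hc.add_inner_gradient_le hd zs
  rw [← neg_sub x zs, inner_neg_right] at h
  calc L x - L zs ≤ ⟪gradient L x, x - zs⟫ := by linarith
    _ ≤ ‖gradient L x‖ * ‖x - zs‖ := real_inner_le_norm _ _
    _ ≤ M * ‖x - zs‖ * ‖x - zs‖ := by gcongr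
    _ = M * ‖x - zs‖ ^ 2 := by ring

/-- First-order convexity at `x + b • v` (towards `zs`) and at `x` (towards `x + b • v`), plus
monotonicity of `∇L` along `v`; `a * b ≤ 1` keeps the coefficient of the monotonicity term
nonnegative. -/
theorem ConvexOn.mul_sub_add_inner_gradient_le (hc : ConvexOn ℝ univ L)
    (hd : Differentiable ℝ L) (x zs v : E) {a b : ℝ} (ha : 0 ≤ a) (hb : 0 ≤ b)
    (hab : a * b ≤ 1) :
    a * (L x - L zs) + ⟪gradient L x, v⟫ ≤ ⟪gradient L (x + b • v), a • (x - zs) + v⟫ := by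
  set y := x + b • v
  have hy_zs : L y - L zs ≤ ⟪gradient L y, x - zs⟫ + b * ⟪gradient L y, v⟫ := by
    have := hc.add_inner_gradient_le (hd y) zs
    rw [show zs - y = -((x - zs) + b • v) by module, inner_neg_right, inner_add_right,
      inner_smul_right] at this
    linarith
  have hx_y : L x - L y ≤ -(b * ⟪gradient L x, v⟫) := by
    have := hc.add_inner_gradient_le (hd x) y
    rw [show y - x = b • v by module, inner_smul_right] at this
    linarith
  have hmono := hc.inner_gradient_add_smul_sub_nonneg hd x v hb
  rw [inner_sub_left] at hmono
  rw [inner_add_right, inner_smul_right]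
  nlinarith [mul_le_mul_of_nonneg_left hy_zs ha, mul_le_mul_of_nonneg_left hx_y ha,
    mul_nonneg (sub_nonneg.2 hab) hmono]

theorem antitoneOn_sq_add_two_mul {f f' : ℝ → ℝ} {a : ℝ} (ha : -2 < a)
    (hf : ∀ t ∈ Ici a, HasDerivAt f (f' t) t) (hf' : ∀ t ∈ Ici a, f' t ≤ -(2 / (t + 2)) * f t) :
    AntitoneOn (fun t ↦ (t + 2) ^ 2 * f t) (Ici a) := by
  have hderiv : ∀ t ∈ Ici a,
      HasDerivAt (fun t ↦ (t + 2) ^ 2 * f t) (2 * (t + 2) * f t + (t + 2) ^ 2 * f' t) t :=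
    fun t ht ↦ ((((hasDerivAt_id' t).add_const 2).fun_pow 2).mul (hf t ht)).congr_deriv (by ring)
  refine antitoneOn_of_hasDerivWithinAt_nonpos (convex_Ici a)
    (fun t ht ↦ (hderiv t ht).continuousAt.continuousWithinAt)
    (fun t ht ↦ (hderiv t (interior_subset ht)).hasDerivWithinAt) fun t ht ↦ ?_
  have ht : t ∈ Ici a := interior_subset ht
  have hpos : 0 < t + 2 := by linarith [mem_Ici.1 ht]
  have := mul_le_mul_of_nonneg_left (hf' t ht) (sq_nonneg (t + 2))
  have h2 : (t + 2) ^ 2 * (-(2 / (t + 2)) * f t) = -(2 * (t + 2) * f t) := by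
    field_simp
  linarith

def IsNesterovSolution (L : E → ℝ) (k : ℝ) (z₁ z₂ : ℝ → E) : Prop :=
  ∀ t, 0 ≤ t → HasDerivAt z₁ (z₂ t) t ∧
    HasDerivAt z₂ (-((2 * (3 / (2 * (t + 2)))) • z₂ t)
      - k • gradient L (z₁ t + ((t - 1) / (t + 2)) • z₂ t)) t

/-- The paper's `V₁`, with `k` in place of `ζ² / M`. -/
def nesterovLyapunov (L : E → ℝ) (zs : E) (k : ℝ) (x v : E) (τ : ℝ) : ℝ :=
  1 / 2 * ‖(2 / (τ + 2)) • (x - zs) + v‖ ^ 2 + k * (L x - L zs)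

theorem nesterovLyapunov_le (hc : ConvexOn ℝ univ L) (hd : DifferentiableAt ℝ L x)
    (hk : 0 ≤ k) (hM : 0 ≤ M) (hgrad : ‖gradient L x‖ ≤ M * ‖x - zs‖) (v : E) {τ : ℝ}
    (hτ : 0 ≤ τ) :
    nesterovLyapunov L zs k x v τ ≤ (1 + k * M) * (‖x - zs‖ ^ 2 + ‖v‖ ^ 2) := by
  have ha : ‖(2 / (τ + 2)) • (x - zs)‖ ≤ ‖x - zs‖ := by
    rw [norm_smul, Real.norm_of_nonneg (by positivity)]
    exact mul_le_of_le_one_left (norm_nonneg _) ((div_le_one (by positivity)).2 (by linarith))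
  have hsq : ‖(2 / (τ + 2)) • (x - zs) + v‖ ^ 2 ≤ 2 * (‖x - zs‖ ^ 2 + ‖v‖ ^ 2) :=
    calc _ ≤ (‖(2 / (τ + 2)) • (x - zs)‖ + ‖v‖) ^ 2 := by gcongr; exact norm_add_le _ _
      _ ≤ (‖x - zs‖ + ‖v‖) ^ 2 := by gcongr
      _ ≤ 2 * (‖x - zs‖ ^ 2 + ‖v‖ ^ 2) := add_sq_le
  have hL := mul_le_mul_of_nonneg_left (hc.sub_le_of_norm_gradient_le hd hgrad) hk
  unfold nesterovLyapunov
  nlinarith [mul_nonneg (mul_nonneg hk hM) (sq_nonneg ‖v‖)]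

namespace IsNesterovSolution

theorem hasDerivAt_norm_sub_sq_add_norm_sq (hsol : IsNesterovSolution L k z₁ z₂) {t : ℝ}
    (ht : 0 ≤ t) :
    HasDerivAt (fun s ↦ ‖z₁ s - zs‖ ^ 2 + ‖z₂ s‖ ^ 2)
      (2 * ⟪z₁ t - zs, z₂ t⟫ + 2 * ⟪z₂ t, -((2 * (3 / (2 * (t + 2)))) • z₂ t)
        - k • gradient L (z₁ t + ((t - 1) / (t + 2)) • z₂ t)⟫) t :=
  ((hsol t ht).1.sub_const zs).norm_sq.add (hsol t ht).2.norm_sq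

theorem norm_sub_sq_add_norm_sq_le (hsol : IsNesterovSolution L k z₁ z₂) (hk : 0 ≤ k)
    (hM : 0 ≤ M) (hgrad : ∀ x, ‖gradient L x‖ ≤ M * ‖x - zs‖) {t : ℝ} (ht : 0 ≤ t) :
    ‖z₁ t - zs‖ ^ 2 + ‖z₂ t‖ ^ 2
      ≤ Real.exp ((1 + 3 * (k * M)) * t) * (‖z₁ 0 - zs‖ ^ 2 + ‖z₂ 0‖ ^ 2) := by
  have hbound : ∀ τ ∈ Ico 0 t,
      2 * ⟪z₁ τ - zs, z₂ τ⟫ + 2 * ⟪z₂ τ, -((2 * (3 / (2 * (τ + 2)))) • z₂ τ)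
        - k • gradient L (z₁ τ + ((τ - 1) / (τ + 2)) • z₂ τ)⟫
      ≤ (1 + 3 * (k * M)) * (‖z₁ τ - zs‖ ^ 2 + ‖z₂ τ‖ ^ 2) + 0 := by
    rintro τ ⟨hτ, -⟩
    have hb : ‖((τ - 1) / (τ + 2)) • z₂ τ‖ ≤ ‖z₂ τ‖ := by
      rw [norm_smul]
      refine mul_le_of_le_one_left (norm_nonneg _) ?_
      rw [Real.norm_eq_abs, abs_div, abs_of_pos (show (0 : ℝ) < τ + 2 by linarith),
        div_le_one (by linarith), abs_le]
      constructor <;> linarith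
    have hG : ‖gradient L (z₁ τ + ((τ - 1) / (τ + 2)) • z₂ τ)‖ ≤ M * (‖z₁ τ - zs‖ + ‖z₂ τ‖) := by
      refine (hgrad _).trans (mul_le_mul_of_nonneg_left ?_ hM)
      rw [add_sub_right_comm]
      exact (norm_add_le _ _).trans (by linarith)
    rw [add_zero]
    exact two_mul_inner_add_two_mul_inner_le (by positivity) hk hM hG
  have hderiv := fun τ (hτ : τ ∈ Icc 0 t) ↦ hsol.hasDerivAt_norm_sub_sq_add_norm_sq (zs := zs) hτ.1
  have := le_gronwallBound_of_liminf_deriv_right_le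
    (fun τ hτ ↦ (hderiv τ hτ).continuousAt.continuousWithinAt)
    (fun τ hτ _ hr ↦ (hderiv τ (Ico_subset_Icc_self hτ)).hasDerivWithinAt.liminf_right_slope_le hr)
    le_rfl hbound t ⟨ht, le_rfl⟩
  rwa [gronwallBound_ε0, sub_zero, mul_comm] at this

theorem hasDerivAt_nesterovLyapunov (hsol : IsNesterovSolution L k z₁ z₂)
    (hd : Differentiable ℝ L) {t : ℝ} (ht : 0 ≤ t) :
    HasDerivAt (fun s ↦ nesterovLyapunov L zs k (z₁ s) (z₂ s) s)
      (-(1 / (t + 2)) * ‖(2 / (t + 2)) • (z₁ t - zs) + z₂ t‖ ^ 2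
        - k * ⟪gradient L (z₁ t + ((t - 1) / (t + 2)) • z₂ t),
            (2 / (t + 2)) • (z₁ t - zs) + z₂ t⟫
        + k * ⟪gradient L (z₁ t), z₂ t⟫) t := by
  have hpos : t + 2 ≠ 0 := by linarith
  have hcoef : HasDerivAt (fun s : ℝ ↦ 2 / (s + 2)) (-(2 / (t + 2) ^ 2)) t := by
    simpa [div_eq_mul_inv, hpos] using (((hasDerivAt_id t).add_const 2).inv hpos).const_mul 2
  have hw : HasDerivAt (fun s ↦ (2 / (s + 2)) • (z₁ s - zs) + z₂ s)
      (-(1 / (t + 2)) • ((2 / (t + 2)) • (z₁ t - zs) + z₂ t)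
        - k • gradient L (z₁ t + ((t - 1) / (t + 2)) • z₂ t)) t := by
    refine ((hcoef.smul ((hsol t ht).1.sub_const zs)).add (hsol t ht).2).congr_deriv ?_
    match_scalars <;> field_simp; ring
  have hL := (hd (z₁ t)).hasGradientAt.comp_hasDerivAt (hsol t ht).1
  refine ((hw.norm_sq.const_mul (1 / 2)).add ((hL.sub_const (L zs)).const_mul k)).congr_deriv ?_
  rw [inner_sub_right, inner_smul_right, inner_smul_right, real_inner_self_eq_norm_sq,
    real_inner_comm]
  ring

theorem antitoneOn_nesterovLyapunov (hsol : IsNesterovSolution L k z₁ z₂)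
    (hc : ConvexOn ℝ univ L) (hd : Differentiable ℝ L) (hk : 0 ≤ k) :
    AntitoneOn (fun t ↦ (t + 2) ^ 2 * nesterovLyapunov L zs k (z₁ t) (z₂ t) t) (Ici 1) := by
  refine antitoneOn_sq_add_two_mul (by norm_num)
    (fun t ht ↦ hsol.hasDerivAt_nesterovLyapunov hd (zero_le_one.trans ht)) fun t ht ↦ ?_
  have ht : 1 ≤ t := ht
  have key := hc.mul_sub_add_inner_gradient_le hd (z₁ t) zs (z₂ t)
    (a := 2 / (t + 2)) (b := (t - 1) / (t + 2)) (by positivity)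
    (div_nonneg (by linarith) (by linarith))
    (by rw [div_mul_div_comm, div_le_one (by positivity)]; nlinarith)
  unfold nesterovLyapunov
  linear_combination k * key

end IsNesterovSolution

end

theorem nesterov_convergence_rate_general (ζ M : ℝ) (hM : 0 < M) :
    ∃ c : ℝ, 0 < c ∧
      ∀ (n : ℕ), 1 ≤ n →
      ∀ (L : EuclideanSpace ℝ (Fin n) → ℝ) (zs : EuclideanSpace ℝ (Fin n)),
        ContDiff ℝ 1 L →
        ConvexOn ℝ Set.univ L →
        (∀ z, L zs ≤ L z) →
        (∀ z, (∀ y, L z ≤ L y) → z = zs) →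
        (∀ w u, ‖gradient L w - gradient L u‖ ≤ M * ‖w - u‖) →
        ∀ z₁ z₂ : ℝ → EuclideanSpace ℝ (Fin n),
          (∀ t, 0 ≤ t → HasDerivAt z₁ (z₂ t) t) →
          (∀ t, 0 ≤ t →
            HasDerivAt z₂
              (-((2 * (3 / (2 * (t + 2)))) • z₂ t)
                - (ζ ^ 2 / M) • gradient L (z₁ t + ((t - 1) / (t + 2)) • z₂ t)) t) →
          ∀ t, 1 ≤ t →
            (ζ ^ 2 / M) * (L (z₁ t) - L zs)
              ≤ (1 / 2) * ‖(2 / (t + 2)) • (z₁ t - zs) + z₂ t‖ ^ 2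
                  + (ζ ^ 2 / M) * (L (z₁ t) - L zs) ∧
            (1 / 2) * ‖(2 / (t + 2)) • (z₁ t - zs) + z₂ t‖ ^ 2
                + (ζ ^ 2 / M) * (L (z₁ t) - L zs)
              ≤ (9 * c / (t + 2) ^ 2) * (‖z₁ 0 - zs‖ ^ 2 + ‖z₂ 0‖ ^ 2) := by
  refine ⟨(1 + ζ ^ 2) * Real.exp (1 + 3 * ζ ^ 2), by positivity, ?_⟩
  intro n _ L zs hC1 hconv hmin _ hLip z₁ z₂ hz₁ hz₂ t ht
  set k := ζ ^ 2 / M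
  have hk : 0 ≤ k := by positivity
  have hkM : k * M = ζ ^ 2 := div_mul_cancel₀ _ hM.ne'
  have hd : Differentiable ℝ L := hC1.differentiable one_ne_zero
  have hgrad : ∀ x, ‖gradient L x‖ ≤ M * ‖x - zs‖ := fun x ↦ by
    simpa [IsLocalMin.gradient_eq_zero (.of_forall hmin)] using hLip x zs
  have hsol : IsNesterovSolution L k z₁ z₂ := fun s hs ↦ ⟨hz₁ s hs, hz₂ s hs⟩
  change k * _ ≤ nesterovLyapunov L zs k (z₁ t) (z₂ t) t ∧
    nesterovLyapunov L zs k (z₁ t) (z₂ t) t ≤ _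
  refine ⟨le_add_of_nonneg_left (by positivity), ?_⟩
  rw [div_mul_eq_mul_div, le_div_iff₀ (by positivity)]
  calc nesterovLyapunov L zs k (z₁ t) (z₂ t) t * (t + 2) ^ 2
      ≤ (1 + 2) ^ 2 * nesterovLyapunov L zs k (z₁ 1) (z₂ 1) 1 := by
        rw [mul_comm]
        exact hsol.antitoneOn_nesterovLyapunov hconv hd hk self_mem_Ici ht ht
    _ ≤ (1 + 2) ^ 2 * ((1 + k * M) * (‖z₁ 1 - zs‖ ^ 2 + ‖z₂ 1‖ ^ 2)) := by
        gcongr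
        exact nesterovLyapunov_le hconv (hd _) hk hM.le (hgrad _) _ zero_le_one
    _ ≤ (1 + 2) ^ 2 * ((1 + k * M) * (Real.exp ((1 + 3 * (k * M)) * 1)
          * (‖z₁ 0 - zs‖ ^ 2 + ‖z₂ 0‖ ^ 2))) := by
        gcongr
        exact hsol.norm_sub_sq_add_norm_sq_le hk hM.le hgrad zero_le_one
    _ = _ := by rw [hkM, mul_one]; ring

/-- Convergence rate of Nesterov's method in terms of initial data: there exists
`c > 0`, depending only on `ζ` and `M`, such that every solution satisfies, for
`t ≥ 1`, `(ζ²/M)(L(z₁(t)) - L*) ≤ V₁(z(t), t) ≤ (9c/(t+2)²)(‖z₁(0) - z₁*‖² + ‖z₂(0)‖²)`. -/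
theorem nesterov_convergence_rate (ζ M : ℝ) (hζ : 0 < ζ) (hM : 0 < M) :
    ∃ c : ℝ, 0 < c ∧
      ∀ (n : ℕ), 1 ≤ n →
      ∀ (L : EuclideanSpace ℝ (Fin n) → ℝ) (zs : EuclideanSpace ℝ (Fin n)),
        ContDiff ℝ 1 L →
        ConvexOn ℝ Set.univ L →
        (∀ z, L zs ≤ L z) →
        (∀ z, (∀ y, L z ≤ L y) → z = zs) →
        (∀ w u, ‖gradient L w - gradient L u‖ ≤ M * ‖w - u‖) →
        ∀ z₁ z₂ : ℝ → EuclideanSpace ℝ (Fin n),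
          (∀ t, 0 ≤ t → HasDerivAt z₁ (z₂ t) t) →
          (∀ t, 0 ≤ t →
            HasDerivAt z₂
              (-((2 * (3 / (2 * (t + 2)))) • z₂ t)
                - (ζ ^ 2 / M) • gradient L (z₁ t + ((t - 1) / (t + 2)) • z₂ t)) t) →
          ∀ t, 1 ≤ t →
            (ζ ^ 2 / M) * (L (z₁ t) - L zs)
              ≤ (1 / 2) * ‖(2 / (t + 2)) • (z₁ t - zs) + z₂ t‖ ^ 2
                  + (ζ ^ 2 / M) * (L (z₁ t) - L zs) ∧
            (1 / 2) * ‖(2 / (t + 2)) • (z₁ t - zs) + z₂ t‖ ^ 2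
                + (ζ ^ 2 / M) * (L (z₁ t) - L zs)
              ≤ (9 * c / (t + 2) ^ 2) * (‖z₁ 0 - zs‖ ^ 2 + ‖z₂ 0‖ ^ 2) :=
  nesterov_convergence_rate_general ζ M hM
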